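/- arXiv:1803.03685 — 3 statements merged into one kernel-verified Lean document; each statement's English description precedes it below -/
import Mathlib

section
/- Let X ⊆ ℤ × ℤ be a set of crossings with type map t : ℤ × ℤ → Bool, and suppose the four vertices p, p+(1,0), p+(0,1), p+(1,1) of a unit square all lie in X. If at least two of these four vertices are problem crossings each having its two square-adjacent crossings among the four as bad neighbors, then all four vertices are problem crossings and p is a Celtic configuration. -/
/-- Two points of the ℤ² lattice are adjacent if they differ by a unit vector. -/
def Adjacent (p q : ℤ × ℤ) : Prop :=
  p - q = (1, 0) ∨ p - q = (-1, 0) ∨ p - q = (0, 1) ∨ p - q = (0, -1)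

/-- Two vectors in ℤ × ℤ are perpendicular if their dot product vanishes. -/
def Perp (a b : ℤ × ℤ) : Prop := a.1 * b.1 + a.2 * b.2 = 0

lemma adjacent_symm {p q : ℤ × ℤ} (h : Adjacent p q) : Adjacent q p := by
  simp only [Adjacent, Prod.ext_iff, Prod.fst_sub, Prod.snd_sub] at h ⊢
  omega

/-- A Celtic configuration in `(X, t)` based at `p`. -/
def IsCeltic (X : Set (ℤ × ℤ)) (t : ℤ × ℤ → Bool) (p : ℤ × ℤ) : Prop :=
  p ∈ X ∧ p + (1, 0) ∈ X ∧ p + (0, 1) ∈ X ∧ p + (1, 1) ∈ X ∧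
    t p = t (p + (1, 1)) ∧ t (p + (1, 0)) = t (p + (0, 1)) ∧ t p ≠ t (p + (1, 0))

/-- A crossing `v` is resolved with respect to the height assignment `h`. -/
def Resolved (t : ℤ × ℤ → Bool) (h : ℤ × ℤ → ℤ × ℤ → ℤ) (v : ℤ × ℤ) : Prop :=
  if t v then
    (h v (v + (0, 1)) < h v (v + (1, 0)) ∧ h v (v + (0, 1)) < h v (v - (1, 0)) ∧
     h v (v - (0, 1)) < h v (v + (1, 0)) ∧ h v (v - (0, 1)) < h v (v - (1, 0)))
  else
    (h v (v + (1, 0)) < h v (v + (0, 1)) ∧ h v (v + (1, 0)) < h v (v - (0, 1)) ∧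
     h v (v - (1, 0)) < h v (v + (0, 1)) ∧ h v (v - (1, 0)) < h v (v - (0, 1)))

/-- `v ∈ X` is a problem crossing: it has a pair of nearby neighbors in `X`,
both of the opposite crossing type. -/
def ProblemCrossing (X : Set (ℤ × ℤ)) (t : ℤ × ℤ → Bool) (v : ℤ × ℤ) : Prop :=
  v ∈ X ∧ ∃ a b : ℤ × ℤ, a ∈ X ∧ b ∈ X ∧ a ≠ b ∧ Adjacent a v ∧ Adjacent b v ∧
    Perp (a - v) (b - v) ∧ t a ≠ t v ∧ t b ≠ t v

/-- `w` is a bad neighbor of `v`. -/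
def BadNeighbor (X : Set (ℤ × ℤ)) (t : ℤ × ℤ → Bool) (v w : ℤ × ℤ) : Prop :=
  v ∈ X ∧ w ∈ X ∧ Adjacent w v ∧ t w ≠ t v ∧
    ∃ u : ℤ × ℤ, u ∈ X ∧ Adjacent u v ∧ Perp (u - v) (w - v) ∧ t u ≠ t v

/-- The problem crossing graph of `(X, t)`. -/
def ProblemGraph (X : Set (ℤ × ℤ)) (t : ℤ × ℤ → Bool) : SimpleGraph (ℤ × ℤ) where
  Adj v w := v ≠ w ∧ ProblemCrossing X t v ∧ ProblemCrossing X t w ∧ Adjacent v w ∧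
    BadNeighbor X t v w ∧ BadNeighbor X t w v
  symm := ⟨fun v w ⟨h1, h2, h3, h4, h5, h6⟩ => ⟨h1.symm, h3, h2, adjacent_symm h4, h6, h5⟩⟩
  loopless := ⟨fun v h => h.1 rfl⟩

/-!
Each bad-neighbour relation along a side of the square says that the crossing type changes
along that side. Any two corners of the square together account for at least three of its four
sides, and since the type is Boolean it changes an even number of times around the square, so
it changes along all four sides: the square is coloured like a checkerboard. In a
checkerboard square every corner has its two square-neighbours as opposite-type nearby
neighbours, and the diagonal corners agree in type, which is the Celtic configuration.
-/

theorem Bool.eq_of_ne_of_ne {a b c : Bool} (hab : a ≠ b) (hcb : c ≠ b) : a = c := by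
  cases a <;> cases b <;> cases c <;> simp_all

theorem BadNeighbor.type_ne {X : Set (ℤ × ℤ)} {t : ℤ × ℤ → Bool} {v w : ℤ × ℤ}
    (h : BadNeighbor X t v w) : t w ≠ t v :=
  h.2.2.2.1

theorem Adjacent.ne_of_perp {a b v : ℤ × ℤ} (hav : Adjacent a v) (hperp : Perp (a - v) (b - v)) :
    a ≠ b := by
  rintro rfl
  rcases hav with h | h | h | h <;> simp [Perp, h] at hperp

theorem problemCrossing_of_perp {X : Set (ℤ × ℤ)} {t : ℤ × ℤ → Bool} {v a b : ℤ × ℤ}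
    (hv : v ∈ X) (ha : a ∈ X) (hb : b ∈ X) (hav : Adjacent a v) (hbv : Adjacent b v)
    (hperp : Perp (a - v) (b - v)) (hta : t a ≠ t v) (htb : t b ≠ t v) :
    ProblemCrossing X t v :=
  ⟨hv, a, b, ha, hb, hav.ne_of_perp hperp, hav, hbv, hperp, hta, htb⟩

section CheckeredSquare

variable {X : Set (ℤ × ℤ)} {t : ℤ × ℤ → Bool} {p : ℤ × ℤ}

theorem problemCrossing_square_of_checkered
    (h0 : p ∈ X) (h1 : p + (1, 0) ∈ X) (h2 : p + (0, 1) ∈ X) (h3 : p + (1, 1) ∈ X)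
    (hx : t (p + (1, 0)) ≠ t p) (hy : t (p + (0, 1)) ≠ t p) (hd : t (p + (1, 1)) = t p) :
    ProblemCrossing X t p ∧ ProblemCrossing X t (p + (1, 0)) ∧
      ProblemCrossing X t (p + (0, 1)) ∧ ProblemCrossing X t (p + (1, 1)) := by
  have hx' : t (p + (1, 0)) ≠ t (p + (1, 1)) := hd ▸ hx
  have hy' : t (p + (0, 1)) ≠ t (p + (1, 1)) := hd ▸ hy
  refine ⟨problemCrossing_of_perp h0 h1 h2 ?_ ?_ ?_ hx hy,
    problemCrossing_of_perp h1 h0 h3 ?_ ?_ ?_ hx.symm hx'.symm,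
    problemCrossing_of_perp h2 h0 h3 ?_ ?_ ?_ hy.symm hy'.symm,
    problemCrossing_of_perp h3 h1 h2 ?_ ?_ ?_ hx' hy'⟩ <;>
  simp [Adjacent, Perp, Prod.ext_iff]

theorem isCeltic_of_checkered
    (h0 : p ∈ X) (h1 : p + (1, 0) ∈ X) (h2 : p + (0, 1) ∈ X) (h3 : p + (1, 1) ∈ X)
    (hx : t (p + (1, 0)) ≠ t p) (hy : t (p + (0, 1)) ≠ t p) (hd : t (p + (1, 1)) = t p) :
    IsCeltic X t p :=
  ⟨h0, h1, h2, h3, hd.symm, Bool.eq_of_ne_of_ne hx hy, hx.symm⟩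

end CheckeredSquare

/-- If at least two of the four vertices of a unit square of crossings are
problem crossings having their two square-adjacent crossings among their bad
neighbors, then all four vertices are problem crossings and the square is a
Celtic configuration. -/
theorem square_two_problem_implies_celtic
    (X : Set (ℤ × ℤ)) (t : ℤ × ℤ → Bool) (p : ℤ × ℤ)
    (h0 : p ∈ X) (h1 : p + (1, 0) ∈ X) (h2 : p + (0, 1) ∈ X) (h3 : p + (1, 1) ∈ X)
    (htwo :
      (ProblemCrossing X t p ∧
          BadNeighbor X t p (p + (1, 0)) ∧ BadNeighbor X t p (p + (0, 1))) ∧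
        (ProblemCrossing X t (p + (1, 0)) ∧
          BadNeighbor X t (p + (1, 0)) p ∧ BadNeighbor X t (p + (1, 0)) (p + (1, 1))) ∨
      (ProblemCrossing X t p ∧
          BadNeighbor X t p (p + (1, 0)) ∧ BadNeighbor X t p (p + (0, 1))) ∧
        (ProblemCrossing X t (p + (0, 1)) ∧
          BadNeighbor X t (p + (0, 1)) p ∧ BadNeighbor X t (p + (0, 1)) (p + (1, 1))) ∨
      (ProblemCrossing X t p ∧
          BadNeighbor X t p (p + (1, 0)) ∧ BadNeighbor X t p (p + (0, 1))) ∧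
        (ProblemCrossing X t (p + (1, 1)) ∧
          BadNeighbor X t (p + (1, 1)) (p + (1, 0)) ∧ BadNeighbor X t (p + (1, 1)) (p + (0, 1))) ∨
      (ProblemCrossing X t (p + (1, 0)) ∧
          BadNeighbor X t (p + (1, 0)) p ∧ BadNeighbor X t (p + (1, 0)) (p + (1, 1))) ∧
        (ProblemCrossing X t (p + (0, 1)) ∧
          BadNeighbor X t (p + (0, 1)) p ∧ BadNeighbor X t (p + (0, 1)) (p + (1, 1))) ∨
      (ProblemCrossing X t (p + (1, 0)) ∧
          BadNeighbor X t (p + (1, 0)) p ∧ BadNeighbor X t (p + (1, 0)) (p + (1, 1))) ∧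
        (ProblemCrossing X t (p + (1, 1)) ∧
          BadNeighbor X t (p + (1, 1)) (p + (1, 0)) ∧ BadNeighbor X t (p + (1, 1)) (p + (0, 1))) ∨
      (ProblemCrossing X t (p + (0, 1)) ∧
          BadNeighbor X t (p + (0, 1)) p ∧ BadNeighbor X t (p + (0, 1)) (p + (1, 1))) ∧
        (ProblemCrossing X t (p + (1, 1)) ∧
          BadNeighbor X t (p + (1, 1)) (p + (1, 0)) ∧ BadNeighbor X t (p + (1, 1)) (p + (0, 1)))) :
    (ProblemCrossing X t p ∧ ProblemCrossing X t (p + (1, 0)) ∧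
      ProblemCrossing X t (p + (0, 1)) ∧ ProblemCrossing X t (p + (1, 1))) ∧
      IsCeltic X t p := by
  obtain ⟨hx, hy, hd⟩ : t (p + (1, 0)) ≠ t p ∧ t (p + (0, 1)) ≠ t p ∧ t (p + (1, 1)) = t p := by
    rcases htwo with h | h | h | h | h | h <;>
    · obtain ⟨⟨-, h₁, h₂⟩, -, h₃, h₄⟩ := h
      replace h₁ := h₁.type_ne; replace h₂ := h₂.type_ne
      replace h₃ := h₃.type_ne; replace h₄ := h₄.type_ne
      revert h₁ h₂ h₃ h₄
      generalize t p = a, t (p + (1, 0)) = b, t (p + (0, 1)) = c, t (p + (1, 1)) = d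
      cases a <;> cases b <;> cases c <;> cases d <;> decide
  exact ⟨problemCrossing_square_of_checkered h0 h1 h2 h3 hx hy hd,
    isCeltic_of_checkered h0 h1 h2 h3 hx hy hd⟩
end

section
/- Let X ⊆ ℤ × ℤ be a set of crossings with type map t : ℤ × ℤ → Bool. If v, w ∈ X are problem crossings that are adjacent in ℤ × ℤ (hence adjacent in the crossing graph) but are not joined by an edge of the problem crossing graph, then neither of v, w is a bad neighbor of the other, and t v = t w. -/
lemma Adjacent.ne {p q : ℤ × ℤ} (h : Adjacent p q) : p ≠ q := by
  rintro rfl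
  simp [Adjacent, Prod.ext_iff] at h

/-- `w - v` is perpendicular to `a - v` unless it is `±(a - v)`, and then it is
perpendicular to `b - v`. -/
lemma perp_or_perp_of_adjacent {a b w v : ℤ × ℤ} (ha : Adjacent a v) (hb : Adjacent b v)
    (hw : Adjacent w v) (hab : Perp (a - v) (b - v)) :
    Perp (a - v) (w - v) ∨ Perp (b - v) (w - v) := by
  rcases ha with ha | ha | ha | ha <;> rcases hb with hb | hb | hb | hb <;>
    rcases hw with hw | hw | hw | hw <;>
    simp_all [Perp]

lemma ProblemCrossing.badNeighbor {X : Set (ℤ × ℤ)} {t : ℤ × ℤ → Bool} {v w : ℤ × ℤ}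
    (hv : ProblemCrossing X t v) (hwX : w ∈ X) (hwv : Adjacent w v) (ht : t w ≠ t v) :
    BadNeighbor X t v w := by
  obtain ⟨hvX, a, b, haX, hbX, -, hav, hbv, hab, hta, htb⟩ := hv
  refine ⟨hvX, hwX, hwv, ht, ?_⟩
  rcases perp_or_perp_of_adjacent hav hbv hwv hab with haw | hbw
  · exact ⟨a, haX, hav, haw, hta⟩
  · exact ⟨b, hbX, hbv, hbw, htb⟩

/-- If two problem crossings are adjacent in the lattice (hence in the crossing
graph) but not joined by an edge of the problem crossing graph, then neither is
a bad neighbor of the other and they have the same crossing type. -/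
theorem adjacent_problem_not_pcg_edge
    (X : Set (ℤ × ℤ)) (t : ℤ × ℤ → Bool) (v w : ℤ × ℤ)
    (hv : ProblemCrossing X t v) (hw : ProblemCrossing X t w)
    (hadj : Adjacent v w) (hnot : ¬ (ProblemGraph X t).Adj v w) :
    ¬ BadNeighbor X t v w ∧ ¬ BadNeighbor X t w v ∧ t v = t w := by
  have htype : t v = t w := by
    by_contra hne
    exact hnot ⟨hadj.ne, hv, hw, hadj,
      hv.badNeighbor hw.1 (adjacent_symm hadj) (Ne.symm hne),
      hw.badNeighbor hv.1 hadj hne⟩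
  exact ⟨fun h => h.2.2.2.1 htype.symm, fun h => h.2.2.2.1 htype, htype⟩
end

section
/- Let X ⊆ ℤ × ℤ be a finite set of crossings with type map t : ℤ × ℤ → Bool. If (X, t) has no Celtic configuration, then there exists a height assignment h such that every crossing v ∈ X is resolved with respect to h. (This is the 'if' direction of the main theorem: a lattice diagram of a knot or link containing no Celtic configuration is the projection of a proper lattice stick knot or link, constructed by lifting the strands at the crossings one at a time.) -/
/-!
Every crossing `x` contributes to the height of each of its four edges: `+N` on the two edges of
its over-strand, `-N` on the two of its under-strand, and a potential `φ x < N` on all four; an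
edge's height is the sum of the contributions of its endpoints. This resolves a crossing `v`
unless an under-edge `{v, a}` and an over-edge `{v, b}` lead to crossings `a`, `b` of the other
type, where the `±N` terms of `a` and `b` point the wrong way and `φ a < φ b` is needed.

Such a potential exists because this relation `ForcedBelow` is acyclic. Let `chainCoord p` be
the `x`-coordinate of an x-crossing and the `y`-coordinate of a y-crossing. Every step of
`ForcedBelow` changes `chainCoord` by `±1`, and two consecutive steps `a → u → b` through
crossings `v` and `w` that change it in opposite directions make `v, a, u, w` a Celtic square.
So `chainCoord` is strictly monotone along every path.
-/

open Relation

section Ranking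

variable {α : Type*} {r : α → α → Prop}

theorem not_transGen_self_of_consistent_steps (f : α → ℤ) (hne : ∀ a b, r a b → f a ≠ f b)
    (hcons : ∀ a u b, r a u → r u b → f u - f a = f b - f u) (a : α) :
    ¬ TransGen r a a := by
  have same_sign : ∀ a b, TransGen r a b → ∀ c, r c a → 0 < (f b - f a) * (f a - f c) := by
    intro a b hab
    induction hab using TransGen.head_induction_on with
    | single hab =>
      intro c hca
      rw [← hcons c _ _ hca hab]
      exact mul_self_pos.mpr (sub_ne_zero.mpr (hne c _ hca).symm)
    | @head a' c' hac' _ ih =>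
      intro c hca
      have hrest := ih a' hac'
      rw [hcons c a' c' hca hac']
      nlinarith [mul_self_pos.mpr (sub_ne_zero.mpr (hne a' c' hac').symm)]
  intro haa
  obtain ⟨c, -, hca⟩ := TransGen.tail'_iff.mp haa
  simpa using same_sign a a haa c hca

theorem exists_rank_of_acyclic {s : Set α} (hs : s.Finite) (hdom : ∀ a b, r a b → a ∈ s)
    (hacyc : ∀ a, ¬ TransGen r a a) :
    ∃ (N : ℕ) (φ : α → ℕ), (∀ a, φ a < N) ∧ ∀ a b, r a b → φ a < φ b := by
  have hsub : ∀ b, {c | TransGen r c b} ⊆ s := fun b c hcb => by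
    obtain ⟨d, hcd, -⟩ := TransGen.head'_iff.mp hcb
    exact hdom _ _ hcd
  refine ⟨s.ncard + 1, fun b => {c | TransGen r c b}.ncard,
    fun b => Nat.lt_succ_of_le (Set.ncard_le_ncard (hsub b) hs), fun a b hab => ?_⟩
  exact Set.ncard_lt_ncard ⟨fun c hca => hca.tail hab, fun h => hacyc a (h (.single hab))⟩
    (hs.subset (hsub b))

end Ranking

theorem exists_isCeltic_of_square {X : Set (ℤ × ℤ)} {t : ℤ × ℤ → Bool} {v a u w : ℤ × ℤ}
    (hv : v ∈ X) (ha : a ∈ X) (hu : u ∈ X) (hw : w ∈ X)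
    (ha' : a = (w.1, v.2)) (hu' : u = (v.1, w.2))
    (hw₁ : w.1 = v.1 + 1 ∨ w.1 = v.1 - 1) (hw₂ : w.2 = v.2 + 1 ∨ w.2 = v.2 - 1)
    (hvw : t v = t w) (hau : t a = t u) (hva : t v ≠ t a) :
    ∃ p, IsCeltic X t p := by
  obtain ⟨v₁, v₂⟩ := v
  obtain ⟨w₁, w₂⟩ := w
  subst ha' hu'
  dsimp only at *
  rcases hw₁ with rfl | h₁ <;> rcases hw₂ with rfl | h₂
  · exact ⟨(v₁, v₂), by simp only [IsCeltic, Prod.mk_add_mk, add_zero]; grind⟩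
  · obtain rfl : v₂ = w₂ + 1 := by omega
    exact ⟨(v₁, w₂), by simp only [IsCeltic, Prod.mk_add_mk, add_zero]; grind⟩
  · obtain rfl : v₁ = w₁ + 1 := by omega
    exact ⟨(w₁, v₂), by simp only [IsCeltic, Prod.mk_add_mk, add_zero]; grind⟩
  · obtain rfl : v₁ = w₁ + 1 := by omega
    obtain rfl : v₂ = w₂ + 1 := by omega
    exact ⟨(w₁, w₂), by simp only [IsCeltic, Prod.mk_add_mk, add_zero]; grind⟩

/-- `{v, a}` lies on the under-strand and `{v, b}` on the over-strand at `v`: `decide (a.2 = v.2)`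
is `true` exactly when `{v, a}` is horizontal, the over-direction of an x-crossing. -/
def ForcedBelow (X : Set (ℤ × ℤ)) (t : ℤ × ℤ → Bool) (a b : ℤ × ℤ) : Prop :=
  ∃ v ∈ X, a ∈ X ∧ b ∈ X ∧ Adjacent a v ∧ Adjacent b v ∧ t a ≠ t v ∧ t b ≠ t v ∧
    t v ≠ decide (a.2 = v.2) ∧ t v = decide (b.2 = v.2)

def chainCoord (t : ℤ × ℤ → Bool) (p : ℤ × ℤ) : ℤ := if t p then p.1 else p.2

section ForcedBelow

variable {X : Set (ℤ × ℤ)} {t : ℤ × ℤ → Bool}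

theorem ForcedBelow.exists_coords {a b : ℤ × ℤ} (h : ForcedBelow X t a b) :
    ∃ v ∈ X, a ∈ X ∧ b ∈ X ∧ t a = !t v ∧ t b = !t v ∧
      if t v then a.1 = v.1 ∧ (a.2 = v.2 + 1 ∨ a.2 = v.2 - 1) ∧
          b.2 = v.2 ∧ (b.1 = v.1 + 1 ∨ b.1 = v.1 - 1)
      else a.2 = v.2 ∧ (a.1 = v.1 + 1 ∨ a.1 = v.1 - 1) ∧
          b.1 = v.1 ∧ (b.2 = v.2 + 1 ∨ b.2 = v.2 - 1) := by
  obtain ⟨v, hv, ha, hb, hav, hbv, hta, htb, hva, hvb⟩ := h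
  refine ⟨v, hv, ha, hb, Bool.eq_not_iff.mpr hta, Bool.eq_not_iff.mpr htb, ?_⟩
  simp only [Adjacent, Prod.ext_iff, Prod.fst_sub, Prod.snd_sub] at hav hbv
  cases htv : t v <;>
    simp only [htv, ne_eq, false_eq_decide_iff, true_eq_decide_iff, Decidable.not_not,
      Bool.false_eq_true, ↓reduceIte] at hva hvb ⊢ <;>
    omega

theorem ForcedBelow.chainCoord_ne {a b : ℤ × ℤ} (h : ForcedBelow X t a b) :
    chainCoord t a ≠ chainCoord t b := by
  obtain ⟨v, -, -, -, hta, htb, hab⟩ := h.exists_coords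
  unfold chainCoord
  rw [hta, htb]
  cases htv : t v <;>
    simp only [htv, Bool.not_false, Bool.not_true, Bool.false_eq_true, ↓reduceIte] at hab ⊢ <;>
    omega

theorem ForcedBelow.chainCoord_sub_eq (hX : ¬ ∃ p, IsCeltic X t p) {a u b : ℤ × ℤ}
    (hau : ForcedBelow X t a u) (hub : ForcedBelow X t u b) :
    chainCoord t u - chainCoord t a = chainCoord t b - chainCoord t u := by
  obtain ⟨v, hv, ha, hu, hta, htu, hv'⟩ := hau.exists_coords
  obtain ⟨w, hw, -, hb, htu', htb, hw'⟩ := hub.exists_coords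
  have hvw : t v = t w := Bool.not_inj (htu.symm.trans htu')
  rw [← hvw] at hw' htb
  by_contra hne
  apply hX
  unfold chainCoord at hne
  rw [hta, htu, htb] at hne
  cases htv : t v <;>
    simp only [htv, Bool.not_false, Bool.not_true, Bool.false_eq_true, ↓reduceIte] at hv' hw' hne
  · exact exists_isCeltic_of_square hv ha hu hw (by ext <;> dsimp only <;> omega)
      (by ext <;> dsimp only <;> omega) (by omega) (by omega) hvw (by rw [hta, htu])
      (by simp [hta, htv])
  · exact exists_isCeltic_of_square hv hu ha hw (by ext <;> dsimp only <;> omega)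
      (by ext <;> dsimp only <;> omega) (by omega) (by omega) hvw (by rw [hta, htu])
      (by simp [htu, htv])

end ForcedBelow

section Height

variable (X : Set (ℤ × ℤ)) (t : ℤ × ℤ → Bool) (N : ℕ) (φ : ℤ × ℤ → ℕ)

open Classical in
noncomputable def endHeight (x y : ℤ × ℤ) : ℤ :=
  if x ∈ X then (if t x = decide (y.2 = x.2) then (N : ℤ) else -N) + φ x else 0

noncomputable def height (p q : ℤ × ℤ) : ℤ := endHeight X t N φ p q + endHeight X t N φ q p

theorem height_comm (p q : ℤ × ℤ) : height X t N φ p q = height X t N φ q p :=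
  add_comm _ _

variable {X t N φ}

theorem height_under_lt_height_over (hφN : ∀ p, φ p < N)
    (hφ : ∀ a b, ForcedBelow X t a b → φ a < φ b)
    {v a b : ℤ × ℤ} (hv : v ∈ X) (ha : Adjacent a v) (hva : t v ≠ decide (a.2 = v.2))
    (hb : Adjacent b v) (hvb : t v = decide (b.2 = v.2)) :
    height X t N φ v a < height X t N φ v b := by
  have hφa := hφN a
  have hφb := hφN b
  unfold height endHeight
  rw [if_pos hv, if_pos hv, if_neg hva, if_pos hvb]
  split_ifs with ha' hta hb' htb <;> try omega
  have hab := hφ a b ⟨v, hv, ha', hb', ha, hb, ?_, ?_, hva, hvb⟩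
  · omega
  · rw [hta, decide_eq_decide.mpr eq_comm]
    exact hva.symm
  · rwa [hvb, decide_eq_decide.mpr eq_comm]

end Height

/-- The 'if' direction of the main theorem: if a finite crossing configuration
`(X, t)` has no Celtic configuration, then some height assignment resolves
every crossing of `X`. -/
theorem exists_resolving_height_of_no_celtic
    (X : Set (ℤ × ℤ)) (hX : X.Finite) (t : ℤ × ℤ → Bool)
    (hcc : ¬ ∃ p : ℤ × ℤ, IsCeltic X t p) :
    ∃ h : ℤ × ℤ → ℤ × ℤ → ℤ, (∀ p q, h p q = h q p) ∧ ∀ v ∈ X, Resolved t h v := by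
  obtain ⟨N, φ, hφN, hφ⟩ := exists_rank_of_acyclic (r := ForcedBelow X t) hX
    (fun _ _ ⟨_, _, ha, _⟩ => ha)
    (not_transGen_self_of_consistent_steps (chainCoord t) (fun _ _ h => h.chainCoord_ne)
      (fun _ _ _ => ForcedBelow.chainCoord_sub_eq hcc))
  refine ⟨height X t N φ, height_comm X t N φ, fun v hv => ?_⟩
  unfold Resolved
  split_ifs with htv <;> refine ⟨?_, ?_, ?_, ?_⟩ <;>
    apply height_under_lt_height_over hφN hφ hv <;> simp [Adjacent, htv]
end
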